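/- The exponential decay rate of the partial autocorrelation coefficients equals the exponential decay rate of the AR(∞) coefficients: limsup_{n→∞} |φ_{nn}|^{1/n} = limsup_{n→∞} |π_n|^{1/n}. -/

import Mathlib

open scoped RealInnerProductSpace
open Filter

/-- The closed linear span `H_I` of `{X t : t ∈ I}` in a real Hilbert space. -/
noncomputable def hSpan {H : Type*} [NormedAddCommGroup H] [InnerProductSpace ℝ H]
    (X : ℤ → H) (I : Set ℤ) : Submodule ℝ H :=
  (Submodule.span ℝ (X '' I)).topologicalClosure

/-- The orthogonal projection `P_I v` of `v` onto the closed span `H_I`. -/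
noncomputable def projSpan {H : Type*} [NormedAddCommGroup H] [InnerProductSpace ℝ H]
    [CompleteSpace H] (X : ℤ → H) (I : Set ℤ) (v : H) : H :=
  haveI : CompleteSpace (hSpan X I) :=
    (Submodule.isClosed_topologicalClosure _).completeSpace_coe
  (Submodule.orthogonalProjection (hSpan X I) v : H)

/-- The innovation `ε_t = X_t - ∑_{i ≥ 1} π_i X_{t-i}` of the AR(∞) representation. -/
noncomputable def arEps {H : Type*} [NormedAddCommGroup H] [InnerProductSpace ℝ H]
    (X : ℤ → H) (π : ℕ → ℝ) (t : ℤ) : H :=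
  X t - ∑' i : ℕ, π (i + 1) • X (t - (i + 1 : ℕ))

section helpers
variable {H : Type*} [NormedAddCommGroup H] [InnerProductSpace ℝ H] [CompleteSpace H]
  (X : ℤ → H) (I : Set ℤ)

instance hSpan.completeSpace : CompleteSpace (hSpan X I) :=
  (Submodule.isClosed_topologicalClosure _).completeSpace_coe

omit [CompleteSpace H] in
lemma mem_hSpan {s : ℤ} (hs : s ∈ I) : X s ∈ hSpan X I :=
  Submodule.le_topologicalClosure _ (Submodule.subset_span ⟨s, hs, rfl⟩)

lemma projSpan_mem (v : H) : projSpan X I v ∈ hSpan X I := by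
  simp [projSpan]

lemma projSpan_inner_zero (v : H) {w : H} (hw : w ∈ hSpan X I) :
    ⟪v - projSpan X I v, w⟫ = 0 := by
  have h := Submodule.sub_starProjection_mem_orthogonal (K := hSpan X I) v
  rw [real_inner_comm]
  exact h w hw

lemma projSpan_eq_self {w : H} (hw : w ∈ hSpan X I) : projSpan X I w = w := by
  simpa [projSpan] using (Submodule.starProjection_eq_self_iff (K := hSpan X I)).2 hw

lemma projSpan_add (a b : H) : projSpan X I (a + b) = projSpan X I a + projSpan X I b := by
  simp [projSpan, map_add]

lemma projSpan_sub (a b : H) : projSpan X I (a - b) = projSpan X I a - projSpan X I b := by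
  simp [projSpan, map_sub]

lemma projSpan_smul (a : ℝ) (v : H) : projSpan X I (a • v) = a • projSpan X I v := by
  simp [projSpan, map_smul]

lemma projSpan_norm_le (v : H) : ‖projSpan X I v‖ ≤ ‖v‖ := by
  have h1 : ‖Submodule.orthogonalProjection (hSpan X I) v‖ ≤ ‖Submodule.orthogonalProjection (hSpan X I)‖ * ‖v‖ :=
    (Submodule.orthogonalProjection (hSpan X I)).le_opNorm v
  have h2 : ‖Submodule.orthogonalProjection (hSpan X I)‖ * ‖v‖ ≤ 1 * ‖v‖ :=
    mul_le_mul_of_nonneg_right (Submodule.orthogonalProjection_norm_le _) (norm_nonneg v)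
  simpa [projSpan] using h1.trans h2

omit [CompleteSpace H] in
lemma norm_le_of_sq_le_sq {a b : H} (h : ‖a‖ ^ 2 ≤ ‖b‖ ^ 2) : ‖a‖ ≤ ‖b‖ := by
  nlinarith [norm_nonneg a, norm_nonneg b]

lemma norm_sub_projSpan_le (v : H) : ‖v - projSpan X I v‖ ≤ ‖v‖ := by
  have hp : ⟪v - projSpan X I v, projSpan X I v⟫ = 0 :=
    projSpan_inner_zero X I v (projSpan_mem X I v)
  have hpy := norm_add_sq_eq_norm_sq_add_norm_sq_real hp
  have h2 : (v - projSpan X I v) + projSpan X I v = v := by abel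
  rw [h2] at hpy
  apply norm_le_of_sq_le_sq
  nlinarith [norm_nonneg (projSpan X I v), hpy]

lemma projSpan_eq_of {v w : H} (hw : w ∈ hSpan X I)
    (ho : ∀ u ∈ hSpan X I, ⟪v - w, u⟫ = 0) : projSpan X I v = w := by
  simpa [projSpan] using
    Submodule.eq_starProjection_of_mem_of_inner_eq_zero (K := hSpan X I) hw ho

lemma inner_hSpan_eq_zero {u : H} (hu : ∀ s ∈ I, ⟪u, X s⟫ = 0) :
    ∀ w ∈ hSpan X I, ⟪u, w⟫ = 0 := by
  intro w hw
  have h1 : Submodule.span ℝ (X '' I) ≤ (innerSL ℝ u).ker := by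
    rw [Submodule.span_le]
    rintro _ ⟨s, hs, rfl⟩
    simpa using hu s hs
  have h2 : hSpan X I ≤ (innerSL ℝ u).ker :=
    Submodule.topologicalClosure_minimal _ h1 (ContinuousLinearMap.isClosed_ker (innerSL ℝ u))
  simpa using h2 hw

lemma projSpan_eq_zero {v : H} (ho : ∀ s ∈ I, ⟪v, X s⟫ = 0) : projSpan X I v = 0 :=
  projSpan_eq_of X I (Submodule.zero_mem _) (by
    intro u hu
    simpa using inner_hSpan_eq_zero X I ho u hu)

omit [CompleteSpace H] in
lemma hSpan_mono {I J : Set ℤ} (h : I ⊆ J) : hSpan X I ≤ hSpan X J :=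
  Submodule.topologicalClosure_mono (Submodule.span_mono (Set.image_mono h))

end helpers

section limsupAux

lemma rpow_one_div_le {w A : ℝ} (hw : 0 ≤ w) (hA : 1 ≤ A) (hwA : w ≤ A) (n : ℕ) :
    w ^ (1/(n:ℝ)) ≤ A := by
  rcases Nat.eq_zero_or_pos n with h | h
  · simpa [h] using hA
  · have h1 : w ^ (1/(n:ℝ)) ≤ A ^ (1/(n:ℝ)) :=
      Real.rpow_le_rpow hw hwA (by positivity)
    have h2 : A ^ (1/(n:ℝ)) ≤ A ^ (1:ℝ) := by
      apply Real.rpow_le_rpow_of_exponent_le hA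
      rw [div_le_one (by exact_mod_cast h)]
      exact_mod_cast h
    simpa using h1.trans h2

lemma limsup_rpow_bddAbove {w : ℕ → ℝ} (hw : ∀ n, 0 ≤ w n) {A : ℝ} (hA : 1 ≤ A)
    (hwA : ∀ n, w n ≤ A) :
    IsBoundedUnder (· ≤ ·) atTop (fun n : ℕ => w n ^ (1/(n:ℝ))) :=
  ⟨A, eventually_map.2 (Eventually.of_forall fun n => rpow_one_div_le (hw n) hA (hwA n) n)⟩

lemma limsup_rpow_nonneg {w : ℕ → ℝ} (hw : ∀ n, 0 ≤ w n) {A : ℝ} (hA : 1 ≤ A)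
    (hwA : ∀ n, w n ≤ A) :
    0 ≤ limsup (fun n : ℕ => w n ^ (1/(n:ℝ))) atTop := by
  apply le_limsup_of_frequently_le
  · exact Frequently.of_forall fun n => Real.rpow_nonneg (hw n) _
  · exact limsup_rpow_bddAbove hw hA hwA

lemma tendsto_rpow_one_div_natCast {A : ℝ} (hA : 0 < A) :
    Tendsto (fun n : ℕ => A ^ (1/(n:ℝ))) atTop (nhds 1) := by
  have h1 : Tendsto (fun n : ℕ => 1/(n:ℝ)) atTop (nhds 0) :=
    tendsto_one_div_atTop_nhds_zero_nat
  have h2 : ContinuousAt (fun x : ℝ => A ^ x) 0 := Real.continuousAt_const_rpow hA.ne'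
  have := h2.tendsto.comp h1
  simpa [Function.comp_def] using this

lemma limsup_rpow_le {w : ℕ → ℝ} (hw : ∀ n, 0 ≤ w n) {A ρ : ℝ} (hA : 1 ≤ A) (hρ : 0 < ρ)
    (h : ∀ᶠ n in atTop, w n ≤ A * ρ ^ n) :
    limsup (fun n : ℕ => w n ^ (1/(n:ℝ))) atTop ≤ ρ := by
  have key : ∀ᶠ n in atTop, w n ^ (1/(n:ℝ)) ≤ A ^ (1/(n:ℝ)) * ρ := by
    filter_upwards [h, eventually_ge_atTop 1] with n hn hn1
    have hn0 : (n:ℝ) ≠ 0 := by exact_mod_cast Nat.one_le_iff_ne_zero.mp hn1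
    have e1 : w n ^ (1/(n:ℝ)) ≤ (A * ρ ^ n) ^ (1/(n:ℝ)) :=
      Real.rpow_le_rpow (hw n) hn (by positivity)
    have e2 : (A * ρ ^ n) ^ (1/(n:ℝ)) = A ^ (1/(n:ℝ)) * (ρ ^ n) ^ (1/(n:ℝ)) :=
      Real.mul_rpow (by linarith) (by positivity)
    have e3 : ((ρ ^ n : ℝ)) ^ (1/(n:ℝ)) = ρ := by
      rw [← Real.rpow_natCast ρ n, ← Real.rpow_mul hρ.le]
      rw [mul_one_div, div_self hn0, Real.rpow_one]
    calc w n ^ (1/(n:ℝ)) ≤ (A * ρ ^ n) ^ (1/(n:ℝ)) := e1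
      _ = A ^ (1/(n:ℝ)) * ρ := by rw [e2, e3]
  have hlim : Tendsto (fun n : ℕ => A ^ (1/(n:ℝ)) * ρ) atTop (nhds ρ) := by
    have := (tendsto_rpow_one_div_natCast (by linarith : (0:ℝ) < A)).mul_const ρ
    simpa using this
  -- limsup w^{1/n} ≤ ρ + ε for all ε > 0
  have hcob : IsCoboundedUnder (· ≤ ·) atTop (fun n : ℕ => w n ^ (1/(n:ℝ))) :=
    isCoboundedUnder_le_of_le atTop (x := 0) fun n => Real.rpow_nonneg (hw n) _
  refine le_of_forall_pos_le_add fun ε hε => ?_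
  refine limsup_le_of_le hcob ?_
  have hev : ∀ᶠ n : ℕ in atTop, A ^ (1/(n:ℝ)) * ρ ≤ ρ + ε :=
    hlim.eventually_le_const (lt_add_of_pos_right ρ hε)
  filter_upwards [key, hev] with n h1 h2
  exact h1.trans h2

lemma eventually_le_pow_of_limsup_lt {w : ℕ → ℝ} (hw : ∀ n, 0 ≤ w n) {A ρ : ℝ} (hA : 1 ≤ A)
    (hwA : ∀ n, w n ≤ A)
    (h : limsup (fun n : ℕ => w n ^ (1/(n:ℝ))) atTop < ρ) :
    ∀ᶠ n in atTop, w n ≤ ρ ^ n := by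
  have hev : ∀ᶠ n in atTop, w n ^ (1/(n:ℝ)) < ρ :=
    eventually_lt_of_limsup_lt h (limsup_rpow_bddAbove hw hA hwA)
  filter_upwards [hev, eventually_ge_atTop 1] with n hn hn1
  have hn0 : (n:ℝ) ≠ 0 := by exact_mod_cast Nat.one_le_iff_ne_zero.mp hn1
  have e : (w n ^ (1/(n:ℝ))) ^ (n:ℕ) = w n := by
    rw [← Real.rpow_natCast (w n ^ (1/(n:ℝ))) n, ← Real.rpow_mul (hw n)]
    rw [one_div_mul_cancel hn0, Real.rpow_one]
  calc w n = (w n ^ (1/(n:ℝ))) ^ (n:ℕ) := e.symm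
    _ ≤ ρ ^ n := pow_le_pow_left₀ (Real.rpow_nonneg (hw n) _) hn.le n

lemma limsup_rpow_le_one {w : ℕ → ℝ} (hw : ∀ n, 0 ≤ w n) {A : ℝ} (hA : 1 ≤ A)
    (hwA : ∀ n, w n ≤ A) :
    limsup (fun n : ℕ => w n ^ (1/(n:ℝ))) atTop ≤ 1 := by
  refine le_of_forall_pos_le_add fun ε hε => ?_
  have h1 : (0:ℝ) < 1 := one_pos
  have := limsup_rpow_le hw hA (ρ := 1) one_pos (Eventually.of_forall fun n => by simpa using hwA n)
  linarith

end limsupAux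

set_option maxHeartbeats 1000000 in
/-- The exponential decay rate of the partial autocorrelation coefficients equals the
exponential decay rate of the AR(∞) coefficients:
`limsup |φ_{nn}|^{1/n} = limsup |π_n|^{1/n}`. -/
theorem pacf_decay_rate_eq_ar_decay_rate
    {H : Type*} [NormedAddCommGroup H] [InnerProductSpace ℝ H] [CompleteSpace H]
    (X : ℤ → H) (γ : ℤ → ℝ) (π : ℕ → ℝ) (σε2 : ℝ)
    (hstat : ∀ s t : ℤ, ⟪X s, X t⟫ = γ (t - s))
    (hπ : Summable fun i : ℕ => |π i|)
    (heps_orth : ∀ t s : ℤ, s ≤ t - 1 → ⟪arEps X π t, X s⟫ = 0)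
    (heps_var : ∀ t : ℤ, ‖arEps X π t‖ ^ 2 = σε2)
    (hσε : 0 < σε2)
    (hmin : 0 < ‖X 0 - projSpan X (Set.Iic (-1) ∪ Set.Ici 1) (X 0)‖ ^ 2)
    (φ : ℕ → ℕ → ℝ)
    (hφ : ∀ k : ℕ, 1 ≤ k → ∀ t : ℤ,
      projSpan X (Set.Icc (t - k) (t - 1)) (X t) = ∑ j ∈ Finset.Icc 1 k, φ k j • X (t - j)) :
    Filter.limsup (fun n : ℕ => |φ n n| ^ (1 / (n : ℝ))) Filter.atTop
      = Filter.limsup (fun n : ℕ => |π n| ^ (1 / (n : ℝ))) Filter.atTop := by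
  clear heps_var hσε
  -- shared norm of the X's
  have hXnorm : ∀ t : ℤ, ‖X t‖ = ‖X 0‖ := by
    intro t
    have h1 : ‖X t‖ ^ 2 = γ 0 := by
      rw [← real_inner_self_eq_norm_sq, hstat t t, sub_self]
    have h2 : ‖X 0‖ ^ 2 = γ 0 := by
      rw [← real_inner_self_eq_norm_sq, hstat 0 0, sub_self]
    nlinarith [norm_nonneg (X t), norm_nonneg (X 0)]
  set ρ0 : ℝ := ‖X 0‖ with hρ0def
  have hρ0 : 0 ≤ ρ0 := norm_nonneg _
  -- the dual vector h0
  set J0 : Set ℤ := Set.Iic (-1) ∪ Set.Ici 1 with hJ0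
  set h0 : H := X 0 - projSpan X J0 (X 0) with hh0def
  set d : ℝ := ‖h0‖ ^ 2 with hddef
  have hd : 0 < d := hmin
  have hh0 : 0 < ‖h0‖ := by
    by_contra hc
    push_neg at hc
    have h : ‖h0‖ = 0 := le_antisymm hc (norm_nonneg _)
    rw [hddef, h] at hd; norm_num at hd
  have hin : ∀ s : ℤ, s ≠ 0 → ⟪h0, X s⟫ = 0 := by
    intro s hs
    refine projSpan_inner_zero X J0 (X 0) (mem_hSpan X J0 ?_)
    rw [hJ0]
    rcases lt_or_gt_of_ne hs with h | h
    · exact Or.inl (by simp only [Set.mem_Iic]; omega)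
    · exact Or.inr (by simp only [Set.mem_Ici]; omega)
  have hin0 : ⟪h0, X 0⟫ = d := by
    have h1 : ⟪h0, projSpan X J0 (X 0)⟫ = 0 :=
      projSpan_inner_zero X J0 (X 0) (projSpan_mem X J0 (X 0))
    have e : h0 + projSpan X J0 (X 0) = X 0 := by rw [hh0def]; abel
    rw [← e, inner_add_right, h1, add_zero, real_inner_self_eq_norm_sq, hddef]
  -- summability
  have hπabs : ∀ k : ℕ, Summable fun i : ℕ => |π (i + k)| := fun k =>
    (summable_nat_add_iff k).2 hπ
  have hFnorm : ∀ t : ℤ, ∀ k : ℕ,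
      Summable fun i : ℕ => ‖π (i + k + 1) • X (t - (i + k + 1 : ℕ))‖ := by
    intro t k
    have h : Summable fun i : ℕ => |π (i + (k + 1))| * ρ0 := (hπabs (k + 1)).mul_right ρ0
    apply Summable.congr h
    intro i
    rw [norm_smul, hXnorm, Real.norm_eq_abs, add_assoc]
  have hFs : ∀ t : ℤ, Summable fun i : ℕ => π (i + 1) • X (t - (i + 1 : ℕ)) := by
    intro t
    exact Summable.of_norm (by simpa using hFnorm t 0)
  -- tails
  set T : ℕ → ℝ := fun k => ∑' i : ℕ, |π (i + (k + 1))| with hTdef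
  have hTnn : ∀ k, 0 ≤ T k := fun k => tsum_nonneg fun i => abs_nonneg _
  have hT0 : Filter.Tendsto T atTop (nhds 0) := by
    have h1 : Filter.Tendsto (fun m : ℕ => ∑' i : ℕ, |π (i + m)|) atTop (nhds 0) :=
      tendsto_sum_nat_add (fun j : ℕ => |π j|)
    exact h1.comp (tendsto_add_atTop_nat 1)
  -- extraction of coefficients by pairing with h0
  have hsum_inner : ∀ (k : ℕ) (c : ℕ → ℝ) (n : ℕ), 1 ≤ n → n ≤ k →
      ⟪h0, ∑ j ∈ Finset.Icc 1 k, c j • X ((n : ℤ) - j)⟫ = c n * d := by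
    intro k c n hn hnk
    rw [inner_sum]
    rw [Finset.sum_eq_single_of_mem n (Finset.mem_Icc.2 ⟨hn, hnk⟩)]
    · rw [real_inner_smul_right]
      have h : ((n : ℤ) - (n : ℕ)) = 0 := by push_cast; ring
      rw [h, hin0]
    · intro j hj hjn
      rw [real_inner_smul_right, hin ((n : ℤ) - j) (by push_cast; omega), mul_zero]
  -- inner product of h0 with the AR series
  have hser_inner : ∀ n : ℕ, 1 ≤ n →
      ⟪h0, ∑' i : ℕ, π (i + 1) • X ((n : ℤ) - (i + 1 : ℕ))⟫ = π n * d := by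
    intro n hn
    have hmap : ⟪h0, ∑' i : ℕ, π (i + 1) • X ((n : ℤ) - (i + 1 : ℕ))⟫
        = ∑' i : ℕ, ⟪h0, π (i + 1) • X ((n : ℤ) - (i + 1 : ℕ))⟫ :=
      ContinuousLinearMap.map_tsum (innerSL ℝ h0) (hFs (n : ℤ))
    rw [hmap]
    have hval : ∀ i : ℕ, ⟪h0, π (i + 1) • X ((n : ℤ) - (i + 1 : ℕ))⟫
        = if i = n - 1 then π n * d else 0 := by
      intro i
      rw [real_inner_smul_right]
      by_cases hi : i = n - 1
      · subst hi
        rw [if_pos rfl]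
        have h1 : (n - 1 + 1 : ℕ) = n := by omega
        rw [h1]
        have h2 : ((n : ℤ) - (n : ℕ)) = 0 := by push_cast; ring
        rw [h2, hin0]
      · rw [if_neg hi, hin _ (by push_cast; omega), mul_zero]
    rw [tsum_congr hval, tsum_ite_eq]
  -- the constant
  set c0 : ℝ := ‖h0‖ * ρ0 with hc0def
  have hc0 : 0 ≤ c0 := mul_nonneg (norm_nonneg _) hρ0
  -- ** Key estimate 1 : |φ k n - π n| ≤ (2 c0 / d) T k for n ≤ k **
  have hC' : ∀ n k : ℕ, 1 ≤ n → n ≤ k → |φ k n - π n| ≤ 2 * c0 / d * T k := by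
    intro n k hn hnk
    have hk : 1 ≤ k := hn.trans hnk
    set t : ℤ := (n : ℤ) with htdef
    set I : Set ℤ := Set.Icc (t - k) (t - 1) with hIdef
    set F : ℕ → H := fun i => π (i + 1) • X (t - (i + 1 : ℕ)) with hFdef
    have hFsum : Summable F := hFs t
    have hsplit : ∑ i ∈ Finset.range k, F i + ∑' i, F (i + k) = ∑' i, F i :=
      Summable.sum_add_tsum_nat_add k hFsum
    set A : H := ∑ i ∈ Finset.range k, F i with hAdef
    set B : H := ∑' i, F (i + k) with hBdef
    have hXt : X t = arEps X π t + (A + B) := by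
      have e : arEps X π t = X t - ∑' i, F i := rfl
      rw [hsplit, e]
      abel
    have hPe : projSpan X I (arEps X π t) = 0 := by
      apply projSpan_eq_zero
      intro s hs
      exact heps_orth t s (Set.mem_Icc.1 hs).2
    have hA : A ∈ hSpan X I := by
      apply Submodule.sum_mem
      intro i hi
      apply Submodule.smul_mem
      apply mem_hSpan
      have hik : i < k := Finset.mem_range.1 hi
      rw [hIdef]
      refine Set.mem_Icc.2 ⟨?_, ?_⟩ <;> push_cast <;> omega
    have hPX : projSpan X I (X t) = A + projSpan X I B := by
      rw [hXt, projSpan_add, projSpan_add, hPe, projSpan_eq_self X I hA, zero_add]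
    have h1 : ⟪h0, projSpan X I (X t)⟫ = φ k n * d := by
      rw [hIdef, hφ k hk t, htdef]
      exact hsum_inner k (φ k) n hn hnk
    have h2 : ⟪h0, A + B⟫ = π n * d := by
      have e : A + B = ∑' i, F i := hsplit
      rw [e, hFdef, htdef]
      exact hser_inner n hn
    have h3 : ‖B‖ ≤ ρ0 * T k := by
      have hb : ‖B‖ ≤ ∑' i : ℕ, ‖π (i + k + 1) • X (t - (i + k + 1 : ℕ))‖ :=
        norm_tsum_le_tsum_norm (hFnorm t k)
      have he : ∀ i : ℕ, ‖π (i + k + 1) • X (t - (i + k + 1 : ℕ))‖ = |π (i + (k + 1))| * ρ0 := by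
        intro i; rw [norm_smul, hXnorm, Real.norm_eq_abs, add_assoc]
      rw [tsum_congr he, tsum_mul_right] at hb
      calc ‖B‖ ≤ T k * ρ0 := hb
        _ = ρ0 * T k := mul_comm _ _
    have h4 : ‖projSpan X I B - B‖ ≤ 2 * (ρ0 * T k) := by
      have h5 := projSpan_norm_le X I B
      calc ‖projSpan X I B - B‖ ≤ ‖projSpan X I B‖ + ‖B‖ := norm_sub_le _ _
        _ ≤ 2 * (ρ0 * T k) := by linarith
    have h5 : φ k n * d - π n * d = ⟪h0, projSpan X I B - B⟫ := by
      rw [inner_sub_right, ← h1, ← h2, hPX, inner_add_right, inner_add_right]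
      ring
    have h6 : |φ k n - π n| * d ≤ 2 * c0 * T k := by
      have e : |φ k n - π n| * d = |φ k n * d - π n * d| := by
        rw [← sub_mul, abs_mul, abs_of_pos hd]
      rw [e, h5]
      calc |⟪h0, projSpan X I B - B⟫| ≤ ‖h0‖ * ‖projSpan X I B - B‖ :=
            abs_real_inner_le_norm _ _
        _ ≤ ‖h0‖ * (2 * (ρ0 * T k)) := mul_le_mul_of_nonneg_left h4 (norm_nonneg _)
        _ = 2 * c0 * T k := by rw [hc0def]; ring
    rw [div_mul_eq_mul_div, le_div_iff₀ hd]
    linarith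
  -- ** Key estimate 2 : |φ (m+1) n - φ m n| ≤ (c0/d) |φ (m+1) (m+1)| for n ≤ m **
  have hD' : ∀ n m : ℕ, 1 ≤ n → n ≤ m →
      |φ (m + 1) n - φ m n| ≤ c0 / d * |φ (m + 1) (m + 1)| := by
    intro n m hn hnm
    have hm : 1 ≤ m := hn.trans hnm
    set t : ℤ := (n : ℤ) with htdef
    set I1 : Set ℤ := Set.Icc (t - (m + 1 : ℕ)) (t - 1) with hI1
    set I0 : Set ℤ := Set.Icc (t - (m : ℕ)) (t - 1) with hI0
    have hsub : I0 ⊆ I1 := by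
      rw [hI0, hI1]
      apply Set.Icc_subset_Icc_left
      push_cast; omega
    set c : ℝ := φ (m + 1) (m + 1) with hcdef
    set Y : H := X (t - (m + 1 : ℕ)) with hYdef
    set P1 : H := projSpan X I1 (X t) with hP1
    set P0 : H := projSpan X I0 (X t) with hP0
    have hstep : projSpan X I0 P1 = P0 := by
      have hz : projSpan X I0 (X t - P1) = 0 := by
        apply projSpan_eq_zero
        intro s hs
        exact projSpan_inner_zero X I1 (X t) (mem_hSpan X I1 (hsub hs))
      have e : (X t - P1) + P1 = X t := by abel
      calc projSpan X I0 P1 = projSpan X I0 (X t - P1) + projSpan X I0 P1 := by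
            rw [hz, zero_add]
        _ = projSpan X I0 ((X t - P1) + P1) := (projSpan_add X I0 _ _).symm
        _ = P0 := by rw [e, hP0]
    have hsum1 : P1 = (∑ j ∈ Finset.Icc 1 m, φ (m + 1) j • X (t - j)) + c • Y := by
      rw [hP1, hI1, hφ (m + 1) (by omega) t]
      rw [← Finset.Ico_add_one_right_eq_Icc, Finset.sum_Ico_succ_top (by omega), Finset.Ico_add_one_right_eq_Icc]
    have hsum0 : P0 = ∑ j ∈ Finset.Icc 1 m, φ m j • X (t - j) := by
      rw [hP0, hI0, hφ m hm t]
    set w : H := ∑ j ∈ Finset.Icc 1 m, (φ (m + 1) j - φ m j) • X (t - j) with hwdef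
    have hwmem : w ∈ hSpan X I0 := by
      apply Submodule.sum_mem
      intro j hj
      apply Submodule.smul_mem
      apply mem_hSpan
      have hj' := Finset.mem_Icc.1 hj
      rw [hI0]
      refine Set.mem_Icc.2 ⟨?_, ?_⟩ <;> push_cast <;> omega
    have hD1 : P1 - P0 = w + c • Y := by
      rw [hsum1, hsum0, hwdef]
      rw [show (∑ j ∈ Finset.Icc 1 m, (φ (m + 1) j - φ m j) • X (t - j))
          = ∑ j ∈ Finset.Icc 1 m, (φ (m + 1) j • X (t - j) - φ m j • X (t - j)) from
        Finset.sum_congr rfl (fun j _ => sub_smul _ _ _)]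
      rw [Finset.sum_sub_distrib]
      abel
    have hD2 : (0 : H) = w + c • projSpan X I0 Y := by
      have h := congrArg (projSpan X I0) hD1
      rw [projSpan_sub, hstep, projSpan_eq_self X I0 (projSpan_mem X I0 (X t)), sub_self,
        projSpan_add, projSpan_eq_self X I0 hwmem, projSpan_smul] at h
      exact h
    have hD3 : P1 - P0 = c • (Y - projSpan X I0 Y) := by
      have hw2 : w = -(c • projSpan X I0 Y) := eq_neg_of_add_eq_zero_left hD2.symm
      rw [hD1, hw2, smul_sub]
      abel
    have hD4 : ‖P1 - P0‖ ≤ |c| * ρ0 := by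
      rw [hD3, norm_smul, Real.norm_eq_abs]
      refine mul_le_mul_of_nonneg_left ?_ (abs_nonneg c)
      calc ‖Y - projSpan X I0 Y‖ ≤ ‖Y‖ := norm_sub_projSpan_le X I0 Y
        _ = ρ0 := by rw [hYdef, hXnorm]
    have hp1 : ⟪h0, P1⟫ = φ (m + 1) n * d := by
      rw [hP1, hI1, hφ (m + 1) (by omega) t, htdef]
      exact hsum_inner (m + 1) (φ (m + 1)) n hn (by omega)
    have hp0 : ⟪h0, P0⟫ = φ m n * d := by
      rw [hP0, hI0, hφ m hm t, htdef]
      exact hsum_inner m (φ m) n hn hnm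
    have hpair : φ (m + 1) n * d - φ m n * d = ⟪h0, P1 - P0⟫ := by
      rw [inner_sub_right, hp1, hp0]
    have h6 : |φ (m + 1) n - φ m n| * d ≤ c0 * |c| := by
      have e : |φ (m + 1) n - φ m n| * d = |φ (m + 1) n * d - φ m n * d| := by
        rw [← sub_mul, abs_mul, abs_of_pos hd]
      rw [e, hpair]
      calc |⟪h0, P1 - P0⟫| ≤ ‖h0‖ * ‖P1 - P0‖ := abs_real_inner_le_norm _ _
        _ ≤ ‖h0‖ * (|c| * ρ0) := mul_le_mul_of_nonneg_left hD4 (norm_nonneg _)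
        _ = c0 * |c| := by rw [hc0def]; ring
    rw [div_mul_eq_mul_div, le_div_iff₀ hd]
    linarith
  -- ** the pacf's are bounded **
  have hM' : ∀ k : ℕ, 1 ≤ k → |φ k k| ≤ c0 / d := by
    intro k hk
    have hp : ⟪h0, projSpan X (Set.Icc ((k : ℤ) - k) ((k : ℤ) - 1)) (X k)⟫ = φ k k * d := by
      rw [hφ k hk (k : ℤ)]
      exact hsum_inner k (φ k) k hk le_rfl
    rw [le_div_iff₀ hd]
    have e : |φ k k| * d = |φ k k * d| := by rw [abs_mul, abs_of_pos hd]
    rw [e, ← hp]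
    calc |⟪h0, projSpan X (Set.Icc ((k : ℤ) - k) ((k : ℤ) - 1)) (X k)⟫|
        ≤ ‖h0‖ * ‖projSpan X (Set.Icc ((k : ℤ) - k) ((k : ℤ) - 1)) (X k)‖ :=
          abs_real_inner_le_norm _ _
      _ ≤ ‖h0‖ * ρ0 := by
          refine mul_le_mul_of_nonneg_left ?_ (norm_nonneg _)
          exact (projSpan_norm_le _ _ _).trans_eq (hXnorm _)
      _ = c0 := by rw [hc0def]
  -- ** the finite predictor coefficients converge **
  have hφlim : ∀ n : ℕ, 1 ≤ n → Filter.Tendsto (fun k => φ k n) atTop (nhds (π n)) := by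
    intro n hn
    rw [tendsto_iff_dist_tendsto_zero]
    apply squeeze_zero' (Filter.Eventually.of_forall fun k => dist_nonneg)
      (g := fun k => 2 * c0 / d * T k)
    · filter_upwards [eventually_ge_atTop n] with k hk
      rw [Real.dist_eq]
      exact hC' n k hn hk
    · simpa using hT0.const_mul (2 * c0 / d)
  -- ** limsup bookkeeping **
  set Au : ℝ := max (max 1 (c0 / d)) |φ 0 0| with hAudef
  have hAu1 : 1 ≤ Au := le_trans (le_max_left 1 _) (le_max_left _ _)
  have hu_bd : ∀ n : ℕ, |φ n n| ≤ Au := by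
    intro n
    rcases Nat.eq_zero_or_pos n with h | h
    · rw [h]; exact le_max_right _ _
    · exact le_trans (hM' n h) (le_trans (le_max_right 1 _) (le_max_left _ _))
  set Av : ℝ := max 1 (∑' i : ℕ, |π i|) with hAvdef
  have hAv1 : 1 ≤ Av := le_max_left _ _
  have hv_bd : ∀ n : ℕ, |π n| ≤ Av :=
    fun n => le_trans (Summable.le_tsum hπ n fun _ _ => abs_nonneg _) (le_max_right _ _)
  set L : ℝ := Filter.limsup (fun n : ℕ => |φ n n| ^ (1 / (n : ℝ))) Filter.atTop with hLdef
  set R : ℝ := Filter.limsup (fun n : ℕ => |π n| ^ (1 / (n : ℝ))) Filter.atTop with hRdef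
  have hLnn : 0 ≤ L := limsup_rpow_nonneg (fun n => abs_nonneg _) hAu1 hu_bd
  have hRnn : 0 ≤ R := limsup_rpow_nonneg (fun n => abs_nonneg _) hAv1 hv_bd
  have hL1 : L ≤ 1 := limsup_rpow_le_one (fun n => abs_nonneg _) hAu1 hu_bd
  have hR1 : R ≤ 1 := limsup_rpow_le_one (fun n => abs_nonneg _) hAv1 hv_bd
  -- ** direction 1 : L ≤ R **
  have hLR : L ≤ R := by
    rcases lt_or_ge R 1 with hRlt | hRge
    · by_contra hcon
      push_neg at hcon
      set ρ : ℝ := (R + min L 1) / 2 with hρdef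
      have hminRL : R < min L 1 := lt_min hcon hRlt
      have hρR : R < ρ := by rw [hρdef]; linarith
      have hρm : ρ < min L 1 := by rw [hρdef]; linarith
      have hρ1 : ρ < 1 := lt_of_lt_of_le hρm (min_le_right _ _)
      have hρL : ρ < L := lt_of_lt_of_le hρm (min_le_left _ _)
      have hρpos : 0 < ρ := lt_of_le_of_lt hRnn hρR
      have hev : ∀ᶠ k in atTop, |π k| ≤ ρ ^ k :=
        eventually_le_pow_of_limsup_lt (fun k => abs_nonneg _) hAv1 hv_bd hρR
      obtain ⟨N, hN⟩ := eventually_atTop.1 hev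
      have h1ρ : (0 : ℝ) < 1 - ρ := by linarith
      have hTb : ∀ n, N ≤ n → T n ≤ ρ ^ (n + 1) * (1 - ρ)⁻¹ := by
        intro n hn
        have hgs : Summable (fun i : ℕ => ρ ^ (i + (n + 1))) := by
          apply Summable.congr
            ((summable_geometric_of_lt_one hρpos.le hρ1).mul_right (ρ ^ (n + 1)))
          intro i; exact (pow_add ρ i (n + 1)).symm
        have hle : T n ≤ ∑' i : ℕ, ρ ^ (i + (n + 1)) :=
          Summable.tsum_le_tsum (fun i => hN (i + (n + 1)) (by omega)) (hπabs (n + 1)) hgs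
        calc T n ≤ ∑' i : ℕ, ρ ^ (i + (n + 1)) := hle
          _ = ρ ^ (n + 1) * (1 - ρ)⁻¹ := by
              rw [tsum_congr (fun i : ℕ => pow_add ρ i (n + 1)), tsum_mul_right,
                tsum_geometric_of_lt_one hρpos.le hρ1]
              ring
      have hAB : ∀ᶠ n in atTop, |φ n n| ≤ (1 + 2 * c0 / d * (1 - ρ)⁻¹) * ρ ^ n := by
        filter_upwards [eventually_ge_atTop (max N 1)] with n hn
        have hn1 : 1 ≤ n := le_trans (le_max_right N 1) hn
        have hnN : N ≤ n := le_trans (le_max_left N 1) hn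
        have e1 : |φ n n| ≤ |π n| + 2 * c0 / d * T n := by
          have h := hC' n n hn1 le_rfl
          have habs : |φ n n| - |π n| ≤ |φ n n - π n| := abs_sub_abs_le_abs_sub _ _
          linarith
        have e2 : |π n| ≤ ρ ^ n := hN n hnN
        have e3 : T n ≤ ρ ^ n * (1 - ρ)⁻¹ := by
          refine (hTb n hnN).trans ?_
          have hpow : ρ ^ (n + 1) ≤ ρ ^ n := by
            rw [pow_succ]
            nlinarith [pow_nonneg hρpos.le n]
          exact mul_le_mul_of_nonneg_right hpow (by positivity)
        have hcd : (0 : ℝ) ≤ 2 * c0 / d := by positivity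
        calc |φ n n| ≤ ρ ^ n + 2 * c0 / d * (ρ ^ n * (1 - ρ)⁻¹) := by
              have := mul_le_mul_of_nonneg_left e3 hcd
              linarith
          _ = (1 + 2 * c0 / d * (1 - ρ)⁻¹) * ρ ^ n := by ring
      have hcontra : L ≤ ρ := by
        refine limsup_rpow_le (fun n => abs_nonneg _) ?_ hρpos hAB
        have : (0 : ℝ) ≤ 2 * c0 / d * (1 - ρ)⁻¹ := by positivity
        linarith
      linarith
    · linarith
  -- ** direction 2 : R ≤ L **
  have hRL : R ≤ L := by
    rcases lt_or_ge L 1 with hLlt | hLge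
    · by_contra hcon
      push_neg at hcon
      set ρ : ℝ := (L + min R 1) / 2 with hρdef
      have hminRL : L < min R 1 := lt_min hcon hLlt
      have hρL : L < ρ := by rw [hρdef]; linarith
      have hρm : ρ < min R 1 := by rw [hρdef]; linarith
      have hρ1 : ρ < 1 := lt_of_lt_of_le hρm (min_le_right _ _)
      have hρR : ρ < R := lt_of_lt_of_le hρm (min_le_left _ _)
      have hρpos : 0 < ρ := lt_of_le_of_lt hLnn hρL
      have hev : ∀ᶠ k in atTop, |φ k k| ≤ ρ ^ k :=
        eventually_le_pow_of_limsup_lt (fun k => abs_nonneg _) hAu1 hu_bd hρL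
      obtain ⟨N0, hN0⟩ := eventually_atTop.1 hev
      set N : ℕ := max N0 1 with hNdef
      have h1ρ : (0 : ℝ) < 1 - ρ := by linarith
      have hcd : (0 : ℝ) ≤ c0 / d := by positivity
      have htel : ∀ n, N ≤ n → ∀ K, n ≤ K →
          |φ K n - φ n n| ≤ c0 / d * (ρ ^ (n + 1) * (1 - ρ)⁻¹) := by
        intro n hn K hK
        have hn1 : 1 ≤ n := le_trans (le_max_right N0 1) hn
        have hnN0 : N0 ≤ n := le_trans (le_max_left N0 1) hn
        have step : ∀ K, n ≤ K →
            |φ K n - φ n n| ≤ c0 / d * ∑ m ∈ Finset.Ico n K, ρ ^ (m + 1) := by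
          intro K hK
          induction K, hK using Nat.le_induction with
          | base => simp
          | succ K hK ih =>
            have h1 : |φ (K + 1) n - φ K n| ≤ c0 / d * |φ (K + 1) (K + 1)| :=
              hD' n K hn1 hK
            have h2 : |φ (K + 1) (K + 1)| ≤ ρ ^ (K + 1) := hN0 (K + 1) (by omega)
            rw [Finset.sum_Ico_succ_top hK]
            calc |φ (K + 1) n - φ n n| ≤ |φ (K + 1) n - φ K n| + |φ K n - φ n n| :=
                  abs_sub_le _ _ _
              _ ≤ c0 / d * ρ ^ (K + 1) + c0 / d * ∑ m ∈ Finset.Ico n K, ρ ^ (m + 1) := by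
                  have h3 := h1.trans (mul_le_mul_of_nonneg_left h2 hcd)
                  linarith
              _ = c0 / d * (∑ m ∈ Finset.Ico n K, ρ ^ (m + 1) + ρ ^ (K + 1)) := by ring
        have hsb : ∑ m ∈ Finset.Ico n K, ρ ^ (m + 1) ≤ ρ ^ (n + 1) * (1 - ρ)⁻¹ := by
          rw [Finset.sum_Ico_eq_sum_range]
          have hre : ∀ i ∈ Finset.range (K - n), ρ ^ (n + i + 1) = ρ ^ (i + (n + 1)) := by
            intro i _
            congr 1
            omega
          rw [Finset.sum_congr rfl hre]
          have hgs : Summable (fun i : ℕ => ρ ^ (i + (n + 1))) := by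
            apply Summable.congr
              ((summable_geometric_of_lt_one hρpos.le hρ1).mul_right (ρ ^ (n + 1)))
            intro i; exact (pow_add ρ i (n + 1)).symm
          calc (∑ i ∈ Finset.range (K - n), ρ ^ (i + (n + 1)))
              ≤ ∑' i : ℕ, ρ ^ (i + (n + 1)) :=
                Summable.sum_le_tsum _ (fun i _ => by positivity) hgs
            _ = ρ ^ (n + 1) * (1 - ρ)⁻¹ := by
                rw [tsum_congr (fun i : ℕ => pow_add ρ i (n + 1)), tsum_mul_right,
                  tsum_geometric_of_lt_one hρpos.le hρ1]
                ring
        exact (step K hK).trans (mul_le_mul_of_nonneg_left hsb hcd)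
      have hAB : ∀ᶠ n in atTop, |π n| ≤ (1 + c0 / d * (1 - ρ)⁻¹) * ρ ^ n := by
        filter_upwards [eventually_ge_atTop N] with n hn
        have hn1 : 1 ≤ n := le_trans (le_max_right N0 1) hn
        have hnN0 : N0 ≤ n := le_trans (le_max_left N0 1) hn
        have hlim : Filter.Tendsto (fun K => |φ K n - φ n n|) atTop (nhds |π n - φ n n|) :=
          ((hφlim n hn1).sub_const (φ n n)).abs
        have hb : |π n - φ n n| ≤ c0 / d * (ρ ^ (n + 1) * (1 - ρ)⁻¹) := by
          refine le_of_tendsto hlim ?_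
          filter_upwards [eventually_ge_atTop n] with K hK
          exact htel n hn K hK
        have e2 : |φ n n| ≤ ρ ^ n := hN0 n hnN0
        have e3 : ρ ^ (n + 1) * (1 - ρ)⁻¹ ≤ ρ ^ n * (1 - ρ)⁻¹ := by
          have hpow : ρ ^ (n + 1) ≤ ρ ^ n := by
            rw [pow_succ]
            nlinarith [pow_nonneg hρpos.le n]
          exact mul_le_mul_of_nonneg_right hpow (by positivity)
        have e4 : |π n| ≤ |φ n n| + |π n - φ n n| := by
          have := abs_sub_le (π n) (φ n n) 0
          simp only [sub_zero] at this
          linarith [this]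
        calc |π n| ≤ ρ ^ n + c0 / d * (ρ ^ n * (1 - ρ)⁻¹) := by
              have h5 := mul_le_mul_of_nonneg_left e3 hcd
              linarith
          _ = (1 + c0 / d * (1 - ρ)⁻¹) * ρ ^ n := by ring
      have hcontra : R ≤ ρ := by
        refine limsup_rpow_le (fun n => abs_nonneg _) ?_ hρpos hAB
        have : (0 : ℝ) ≤ c0 / d * (1 - ρ)⁻¹ := by positivity
        linarith
      linarith
    · linarith
  exact le_antisymm hLR hRL
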